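/- arXiv:2602.15385 — 5 statements merged into one kernel-verified Lean document; each statement's English description precedes it below -/
import Mathlib

section
/- Let $I > J \geq 1$ and let $C_{i,j} > 0$ for $1 \le i \le I$, $0 \le j \le J$, $i+j \le I$ be real numbers (the observed upper claims triangle). Define the chain-ladder factor estimates $\widehat{f}_j = \left(\sum_{i=1}^{I-j-1} C_{i,j+1}\right) / \left(\sum_{i=1}^{I-j-1} C_{i,j}\right)$ for $0 \le j \le J-1$. Define recursively: $\widehat{C}^*_{i,J} = C_{i,J}$ for $i \le I-J$; $\widehat{F}_{J-1} = \left(\sum_{i=1}^{I-J} \widehat{C}^*_{i,J}\right)/\left(\sum_{i=1}^{I-J} C_{i,J-1}\right)$ and $\widehat{C}^*_{I-J+1,J} = C_{I-J+1,J-1}\widehat{F}_{J-1}$; and for $j$ decreasing from $J-2$ to $0$, $\widehat{F}_j = \left(\sum_{i=1}^{I-j-1} \widehat{C}^*_{i,J}\right)/\left(\sum_{i=1}^{I-j-1} C_{i,j}\right)$ and $\widehat{C}^*_{I-j,J} = C_{I-j,j}\widehat{F}_j$. Then for every $0 \le j \le J-1$, $\widehat{F}_j = \prod_{l=j}^{J-1}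 \widehat{f}_l$. -/
/-!
Write `D j` and `N j` for the sums of columns `j` and `j + 1` over the rows `1, …, I - j - 1`,
so that `f̂ j = N j / D j`. The rows summed for `F j` are those summed for `F (j + 1)` plus the
row `I - j - 1` appended by the recursion. The old rows contribute `F (j + 1) * D (j + 1)`, and the
appended row contributes `F (j + 1) * C (I - j - 1) (j + 1)`. Together these give
`F (j + 1) * N j`, so `F j = f̂ j * F (j + 1)`. Downward induction from `F (J - 1) = f̂ (J - 1)`
then yields the product.
-/

open Finset

theorem sum_Icc_one_succ_eq_mul {R : Type*} [CommSemiring R] {a b : ℕ → R} {c : R} {n : ℕ}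
    (hsum : ∑ i ∈ Icc 1 n, a i = c * ∑ i ∈ Icc 1 n, b i) (hlast : a (n + 1) = b (n + 1) * c) :
    ∑ i ∈ Icc 1 (n + 1), a i = c * ∑ i ∈ Icc 1 (n + 1), b i := by
  rw [sum_Icc_succ_top (by omega), sum_Icc_succ_top (by omega), hsum, hlast]
  ring

theorem eq_prod_Ico_mul_of_eq_mul_succ {M : Type*} [CommMonoid M] {u f : ℕ → M} {n : ℕ}
    (h : ∀ j < n, u j = f j * u (j + 1)) : ∀ j ≤ n, u j = (∏ l ∈ Ico j n, f l) * u n := by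
  intro j hj
  induction hk : n - j generalizing j with
  | zero => simp [show j = n by omega]
  | succ k ih =>
    rw [h j (by omega), ih (j + 1) (by omega) (by omega),
      prod_eq_prod_Ico_succ_bot (by omega : j < n), mul_assoc]

/-- Grossing-up recursion reproduces the products of chain-ladder factors:
the projection-to-ultimate factor estimates `F j` equal `∏_{l=j}^{J-1} f̂ l`. -/
theorem stmt_0 (I J : ℕ) (hJ : 1 ≤ J) (hIJ : J < I)
    (C : ℕ → ℕ → ℝ)
    (hpos : ∀ i j, 1 ≤ i → i + j ≤ I → j ≤ J → 0 < C i j)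
    (fhat F : ℕ → ℝ) (Cstar : ℕ → ℝ)
    (hfhat : ∀ j, j ≤ J - 1 →
      fhat j = (∑ i ∈ Icc 1 (I - j - 1), C i (j + 1)) / (∑ i ∈ Icc 1 (I - j - 1), C i j))
    (hinit : ∀ i, 1 ≤ i → i ≤ I - J → Cstar i = C i J)
    (hF : ∀ j, j ≤ J - 1 →
      F j = (∑ i ∈ Icc 1 (I - j - 1), Cstar i) / (∑ i ∈ Icc 1 (I - j - 1), C i j))
    (hCstar : ∀ j, j ≤ J - 1 → Cstar (I - j) = C (I - j) j * F j) :
    ∀ j, j ≤ J - 1 → F j = ∏ l ∈ Ico j J, fhat l := by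
  have hD : ∀ j < J, ∑ i ∈ Icc 1 (I - j - 1), C i j ≠ 0 := fun j hj =>
    (sum_pos (fun i hi => hpos i j (mem_Icc.1 hi).1 (by grind) hj.le)
      ⟨1, mem_Icc.2 ⟨le_rfl, by omega⟩⟩).ne'
  have hstep : ∀ j < J - 1, F j = fhat j * F (j + 1) := by
    intro j hj
    have hrows : I - j - 1 = I - (j + 1) - 1 + 1 := by omega
    have hsum : ∑ i ∈ Icc 1 (I - j - 1), Cstar i
        = F (j + 1) * ∑ i ∈ Icc 1 (I - j - 1), C i (j + 1) := by
      rw [hrows]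
      refine sum_Icc_one_succ_eq_mul ?_ ?_
      · rw [hF (j + 1) (by omega), div_mul_cancel₀ _ (hD (j + 1) (by omega))]
      · rw [← hrows, show I - j - 1 = I - (j + 1) by omega, hCstar (j + 1) (by omega)]
    rw [hF j (by omega), hfhat j (by omega), hsum]
    ring
  have hlast : F (J - 1) = fhat (J - 1) := by
    rw [hF _ le_rfl, hfhat _ le_rfl, Nat.sub_add_cancel hJ]
    congr 1
    exact sum_congr rfl fun i hi => hinit i (mem_Icc.1 hi).1 (by grind)
  intro j hj
  rw [eq_prod_Ico_mul_of_eq_mul_succ hstep j hj, hlast,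
    ← prod_Ico_succ_top (by omega : j ≤ J - 1), Nat.sub_add_cancel hJ]
end

section
/- Under the same setup as the grossing-up recursion (positive upper triangle $C_{i,j}$ for $i+j \le I$, chain-ladder factors $\widehat{f}_j$, recursively defined projection-to-ultimate factors $\widehat{F}_j$ and one-shot predictors $\widehat{C}^*_{i,J} = C_{i,I-i}\widehat{F}_{I-i}$ for $i > I-J$), the grossing-up predictors equal the classical chain-ladder predictors: for every accident period $i \in \{I-J+1,\ldots,I\}$, $\widehat{C}^*_{i,J} = C_{i,I-i} \prod_{l=I-i}^{J-1} \widehat{f}_l$. -/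
/-!
With `T_j = ∑_{i ≤ I-j} Ĉ*_{i,J}`, downward induction on `j ≤ J` gives
`T_j = (∑_{i ≤ I-j} C_{i,j}) ∏_{l=j}^{J-1} f̂_l`. At `j + 1` the right-hand side is the numerator
of `f̂_j` times `∏_{l>j} f̂_l`, i.e. its denominator times `∏_{l ≥ j} f̂_l`; hence
`F̂_j = ∏_{l ≥ j} f̂_l`, and the new term `Ĉ*_{I-j,J} = C_{I-j,j} F̂_j` carries the identity from
`T_{j+1}` to `T_j`.
-/

open Finset

theorem sum_Icc_one_sub_eq_add {M : Type*} [AddCommMonoid M] (g : ℕ → M) {n j : ℕ}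
    (h : j < n) : ∑ i ∈ Icc 1 (n - j), g i = ∑ i ∈ Icc 1 (n - j - 1), g i + g (n - j) := by
  obtain ⟨m, hm⟩ : ∃ m, n - j = m + 1 := ⟨n - j - 1, by omega⟩
  rw [hm, sum_Icc_succ_top (by omega), Nat.add_sub_cancel]

theorem sum_Icc_one_sub_pos {I J : ℕ} {C : ℕ → ℕ → ℝ} (hIJ : J < I)
    (hpos : ∀ i j, 1 ≤ i → i + j ≤ I → j ≤ J → 0 < C i j) {j : ℕ} (hj : j < J) :
    0 < ∑ i ∈ Icc 1 (I - j - 1), C i j :=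
  sum_pos (fun i hi ↦ hpos i j (mem_Icc.1 hi).1 (by grind) hj.le)
    ⟨1, mem_Icc.2 ⟨le_rfl, by omega⟩⟩

section GrossingUp

variable {I J : ℕ} {C : ℕ → ℕ → ℝ} {fhat F Cstar : ℕ → ℝ}

theorem sum_mul_prod_Ico_succ_eq (hIJ : J < I)
    (hpos : ∀ i j, 1 ≤ i → i + j ≤ I → j ≤ J → 0 < C i j)
    (hfhat : ∀ j, j ≤ J - 1 →
      fhat j = (∑ i ∈ Icc 1 (I - j - 1), C i (j + 1)) / (∑ i ∈ Icc 1 (I - j - 1), C i j))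
    {j : ℕ} (hj : j < J) :
    (∑ i ∈ Icc 1 (I - j - 1), C i (j + 1)) * ∏ l ∈ Ico (j + 1) J, fhat l
      = (∑ i ∈ Icc 1 (I - j - 1), C i j) * ∏ l ∈ Ico j J, fhat l := by
  have hS := (sum_Icc_one_sub_pos hIJ hpos hj).ne'
  rw [prod_eq_prod_Ico_succ_bot hj, hfhat j (by omega)]
  field_simp

theorem F_eq_prod_of_sum_Cstar_eq (hIJ : J < I)
    (hpos : ∀ i j, 1 ≤ i → i + j ≤ I → j ≤ J → 0 < C i j)
    (hfhat : ∀ j, j ≤ J - 1 →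
      fhat j = (∑ i ∈ Icc 1 (I - j - 1), C i (j + 1)) / (∑ i ∈ Icc 1 (I - j - 1), C i j))
    (hF : ∀ j, j ≤ J - 1 →
      F j = (∑ i ∈ Icc 1 (I - j - 1), Cstar i) / (∑ i ∈ Icc 1 (I - j - 1), C i j))
    {j : ℕ} (hj : j < J)
    (hsum : ∑ i ∈ Icc 1 (I - j - 1), Cstar i
      = (∑ i ∈ Icc 1 (I - j - 1), C i (j + 1)) * ∏ l ∈ Ico (j + 1) J, fhat l) :
    F j = ∏ l ∈ Ico j J, fhat l := by
  rw [hF j (by omega), hsum, sum_mul_prod_Ico_succ_eq hIJ hpos hfhat hj,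
    mul_div_cancel_left₀ _ (sum_Icc_one_sub_pos hIJ hpos hj).ne']

theorem sum_Cstar_eq_sum_mul_prod (hIJ : J < I)
    (hpos : ∀ i j, 1 ≤ i → i + j ≤ I → j ≤ J → 0 < C i j)
    (hfhat : ∀ j, j ≤ J - 1 →
      fhat j = (∑ i ∈ Icc 1 (I - j - 1), C i (j + 1)) / (∑ i ∈ Icc 1 (I - j - 1), C i j))
    (hinit : ∀ i, 1 ≤ i → i ≤ I - J → Cstar i = C i J)
    (hF : ∀ j, j ≤ J - 1 →
      F j = (∑ i ∈ Icc 1 (I - j - 1), Cstar i) / (∑ i ∈ Icc 1 (I - j - 1), C i j))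
    (hCstar : ∀ j, j ≤ J - 1 → Cstar (I - j) = C (I - j) j * F j) {j : ℕ} (hj : j ≤ J) :
    ∑ i ∈ Icc 1 (I - j), Cstar i = (∑ i ∈ Icc 1 (I - j), C i j) * ∏ l ∈ Ico j J, fhat l := by
  induction hj using Nat.decreasingInduction with
  | self =>
    rw [Ico_self, prod_empty, mul_one]
    exact sum_congr rfl fun i hi ↦ hinit i (mem_Icc.1 hi).1 (mem_Icc.1 hi).2
  | of_succ j hj ih =>
    rw [← Nat.sub_sub] at ih
    have hFj := F_eq_prod_of_sum_Cstar_eq hIJ hpos hfhat hF hj ih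
    rw [sum_Icc_one_sub_eq_add _ (hj.trans hIJ), ih, sum_mul_prod_Ico_succ_eq hIJ hpos hfhat hj,
      hCstar j (by omega), hFj, sum_Icc_one_sub_eq_add _ (hj.trans hIJ), add_mul]

end GrossingUp

theorem stmt_1_general (I J : ℕ) (hIJ : J < I)
    (C : ℕ → ℕ → ℝ)
    (hpos : ∀ i j, 1 ≤ i → i + j ≤ I → j ≤ J → 0 < C i j)
    (fhat F : ℕ → ℝ) (Cstar : ℕ → ℝ)
    (hfhat : ∀ j, j ≤ J - 1 →
      fhat j = (∑ i ∈ Icc 1 (I - j - 1), C i (j + 1)) / (∑ i ∈ Icc 1 (I - j - 1), C i j))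
    (hinit : ∀ i, 1 ≤ i → i ≤ I - J → Cstar i = C i J)
    (hF : ∀ j, j ≤ J - 1 →
      F j = (∑ i ∈ Icc 1 (I - j - 1), Cstar i) / (∑ i ∈ Icc 1 (I - j - 1), C i j))
    (hCstar : ∀ j, j ≤ J - 1 → Cstar (I - j) = C (I - j) j * F j) :
    ∀ i, I - J + 1 ≤ i → i ≤ I → Cstar i = C i (I - i) * ∏ l ∈ Ico (I - i) J, fhat l := by
  intro i hi hiI
  have hj : I - i < J := by omega
  have hsum :=
    sum_Cstar_eq_sum_mul_prod hIJ hpos hfhat hinit hF hCstar (show I - i + 1 ≤ J by omega)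
  rw [← Nat.sub_sub] at hsum
  have hFj := F_eq_prod_of_sum_Cstar_eq hIJ hpos hfhat hF hj hsum
  have hCi := hCstar (I - i) (by omega)
  rwa [Nat.sub_sub_self hiI, hFj] at hCi

/-- The grossing-up one-shot predictors equal the classical chain-ladder predictors:
for every accident period `i ∈ {I-J+1, …, I}`,
`Ĉ*_{i,J} = C_{i,I-i} ∏_{l=I-i}^{J-1} f̂_l`. -/
theorem stmt_1 (I J : ℕ) (hJ : 1 ≤ J) (hIJ : J < I)
    (C : ℕ → ℕ → ℝ)
    (hpos : ∀ i j, 1 ≤ i → i + j ≤ I → j ≤ J → 0 < C i j)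
    (fhat F : ℕ → ℝ) (Cstar : ℕ → ℝ)
    (hfhat : ∀ j, j ≤ J - 1 →
      fhat j = (∑ i ∈ Icc 1 (I - j - 1), C i (j + 1)) / (∑ i ∈ Icc 1 (I - j - 1), C i j))
    (hinit : ∀ i, 1 ≤ i → i ≤ I - J → Cstar i = C i J)
    (hF : ∀ j, j ≤ J - 1 →
      F j = (∑ i ∈ Icc 1 (I - j - 1), Cstar i) / (∑ i ∈ Icc 1 (I - j - 1), C i j))
    (hCstar : ∀ j, j ≤ J - 1 → Cstar (I - j) = C (I - j) j * F j) :
    ∀ i, I - J + 1 ≤ i → i ≤ I → Cstar i = C i (I - i) * ∏ l ∈ Ico (I - i) J, fhat l :=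
  stmt_1_general I J hIJ C hpos fhat F Cstar hfhat hinit hF hCstar
end

section
/- In the chain-ladder model, the conditional expectation of the ultimate claim given the observed history satisfies the product formula: for an accident period $i$ with $I-i < J$, $\mathbb{E}[C_{i,J} \mid C_{i,0},\ldots,C_{i,I-i}] = C_{i,I-i}\prod_{l=I-i}^{J-1} f_l$ almost surely. -/
open MeasureTheory Finset

/-- The sigma-algebra generated by the observations `C 0, …, C j`. -/
def hist {Ω : Type*} (C : ℕ → Ω → ℝ) (j : ℕ) : MeasurableSpace Ω :=
  ⨆ k ∈ Set.Iic j, MeasurableSpace.comap (C k) inferInstance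

namespace MeasureTheory

variable {Ω : Type*} {m0 : MeasurableSpace Ω} {μ : Measure Ω} {ℱ : Filtration ℕ m0}
  {X : ℕ → Ω → ℝ} {f : ℕ → ℝ} {N : ℕ}

theorem condExp_eq_mul_prod_of_condExp_succ [SigmaFiniteFiltration μ ℱ]
    (hX : StronglyAdapted ℱ X) (hint : ∀ n, Integrable (X n) μ)
    (hstep : ∀ n < N, μ[X (n + 1) | ℱ n] =ᵐ[μ] fun ω => f n * X n ω)
    {k n : ℕ} (hkn : k ≤ n) (hnN : n ≤ N) :
    μ[X n | ℱ k] =ᵐ[μ] fun ω => X k ω * ∏ l ∈ Ico k n, f l := by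
  induction n, hkn using Nat.le_induction with
  | base =>
    simp only [Ico_self, prod_empty, mul_one]
    exact (condExp_of_stronglyMeasurable (ℱ.le k) (hX k) (hint k)).eventuallyEq
  | succ n hkn ih =>
    have hnN' : n < N := Nat.lt_of_succ_le hnN
    calc μ[X (n + 1) | ℱ k]
        =ᵐ[μ] μ[μ[X (n + 1) | ℱ n] | ℱ k] := (condExp_condExp_of_le (ℱ.mono hkn) (ℱ.le n)).symm
      _ =ᵐ[μ] μ[f n • X n | ℱ k] := condExp_congr_ae (hstep n hnN')
      _ =ᵐ[μ] f n • μ[X n | ℱ k] := condExp_smul (f n) (X n) (ℱ k)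
      _ =ᵐ[μ] fun ω => X k ω * ∏ l ∈ Ico k (n + 1), f l := by
        filter_upwards [ih hnN'.le] with ω hω
        rw [Pi.smul_apply, hω, prod_Ico_succ_top hkn, smul_eq_mul]
        ring

end MeasureTheory

theorem stmt_4_general {Ω : Type*} {m0 : MeasurableSpace Ω} (μ : Measure Ω) [IsProbabilityMeasure μ]
    (I J i : ℕ) (hi : I - i < J)
    (C : ℕ → Ω → ℝ) (f : ℕ → ℝ)
    (hmeas : ∀ j, Measurable (C j))
    (hint : ∀ j, Integrable (C j) μ)
    (hCL : ∀ j, j < J → μ[C (j + 1) | hist C j] =ᵐ[μ] fun ω => f j * C j ω) :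
    μ[C J | hist C (I - i)] =ᵐ[μ] fun ω => C (I - i) ω * ∏ l ∈ Ico (I - i) J, f l := by
  -- `hist C` is definitionally the natural filtration of `C`.
  exact condExp_eq_mul_prod_of_condExp_succ
    (ℱ := Filtration.natural C fun j => (hmeas j).stronglyMeasurable)
    (Filtration.stronglyAdapted_natural _) hint hCL hi.le le_rfl

/-- Chain-ladder product formula for the conditionally expected ultimate claim:
`E[C_J | C_0, …, C_{I-i}] = C_{I-i} ∏_{l=I-i}^{J-1} f_l` a.s. -/
theorem stmt_4 {Ω : Type*} {m0 : MeasurableSpace Ω} (μ : Measure Ω) [IsProbabilityMeasure μ]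
    (I J i : ℕ) (hJ : 1 ≤ J) (hi : I - i < J)
    (C : ℕ → Ω → ℝ) (f : ℕ → ℝ)
    (hmeas : ∀ j, Measurable (C j))
    (hint : ∀ j, Integrable (C j) μ)
    (hpos : ∀ j, ∀ᵐ ω ∂μ, 0 < C j ω)
    (hf : ∀ j, j < J → 0 < f j)
    (hCL : ∀ j, j < J → μ[C (j + 1) | hist C j] =ᵐ[μ] fun ω => f j * C j ω) :
    μ[C J | hist C (I - i)] =ᵐ[μ] fun ω => C (I - i) ω * ∏ l ∈ Ico (I - i) J, f l :=
  stmt_4_general (m0 := m0) μ I J i hi C f hmeas hint hCL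
end

section
/- Uncorrelatedness of successive chain-ladder estimators: under Mack's model assumptions, for $j < k$, $\mathbb{E}[\widehat{f}_j\,\widehat{f}_k] = f_j f_k$, where $\widehat{f}_j$ are the standard chain-ladder factor estimators. Consequently, $\mathbb{E}\left[\prod_{l=j}^{J-1}\widehat{f}_l\right] = \prod_{l=j}^{J-1} f_l$, i.e., the estimated projection-to-ultimate factor is an unbiased estimator of the true projection-to-ultimate factor $F_j$. -/
/-!
Independence of the accident periods makes conditioning `C i (k + 1)` on the joint history `ℬ_k`
the same as conditioning on the history of accident period `i` alone, so
`E[C i (k + 1) | ℬ_k] = f k * C i k`, and pulling the `ℬ_k`-measurable denominator out gives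
`E[f̂_k | ℬ_k] = f k`. As `f̂_j` is `ℬ_k`-measurable for `j < k`, the tower property yields
`E[g f̂_k] = f k E[g]` for every `ℬ_k`-measurable `g`; both claims follow, the product one by
induction on the number of factors.
-/

open MeasureTheory Finset

open MeasurableSpace ProbabilityTheory

section

variable {Ω E : Type*} [NormedAddCommGroup E] [NormedSpace ℝ E]

theorem MeasurableSpace.isPiSystem_image2_inter (m₁ m₂ : MeasurableSpace Ω) :
    IsPiSystem (Set.image2 (· ∩ ·) {s | MeasurableSet[m₁] s} {s | MeasurableSet[m₂] s}) := by
  rintro _ ⟨s₁, hs₁, s₂, hs₂, rfl⟩ _ ⟨t₁, ht₁, t₂, ht₂, rfl⟩ -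
  exact ⟨s₁ ∩ t₁, hs₁.inter ht₁, s₂ ∩ t₂, hs₂.inter ht₂, Set.inter_inter_inter_comm _ _ _ _⟩

theorem MeasurableSpace.sup_eq_generateFrom_image2_inter (m₁ m₂ : MeasurableSpace Ω) :
    m₁ ⊔ m₂ = generateFrom (Set.image2 (· ∩ ·) {s | MeasurableSet[m₁] s}
      {s | MeasurableSet[m₂] s}) := by
  refine le_antisymm (sup_le (fun s hs => ?_) (fun s hs => ?_)) (generateFrom_le ?_)
  · exact measurableSet_generateFrom ⟨s, hs, Set.univ, .univ, Set.inter_univ s⟩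
  · exact measurableSet_generateFrom ⟨Set.univ, .univ, s, hs, Set.univ_inter s⟩
  · rintro _ ⟨s₁, hs₁, s₂, hs₂, rfl⟩
    exact (le_sup_left (b := m₂) s₁ hs₁).inter (le_sup_right (a := m₁) s₂ hs₂)

namespace MeasureTheory

variable {m m₁ m₂ m₀ : MeasurableSpace Ω} {μ : Measure[m₀] Ω}

theorem setIntegral_eq_of_isPiSystem {S : Set (Set Ω)} {f g : Ω → E} (hm : m ≤ m₀)
    (h_eq : m = generateFrom S) (h_inter : IsPiSystem S) (hf : Integrable f μ)
    (hg : Integrable g μ) (h_univ : ∫ x, f x ∂μ = ∫ x, g x ∂μ)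
    (h_basic : ∀ t ∈ S, ∫ x in t, f x ∂μ = ∫ x in t, g x ∂μ) {t : Set Ω}
    (ht : MeasurableSet[m] t) : ∫ x in t, f x ∂μ = ∫ x in t, g x ∂μ := by
  induction t, ht using MeasurableSpace.induction_on_inter h_eq h_inter with
  | empty => simp
  | basic t ht => exact h_basic t ht
  | compl t ht h => rw [setIntegral_compl (hm t ht) hf, setIntegral_compl (hm t ht) hg, h, h_univ]
  | iUnion s hd hs h =>
    rw [integral_iUnion (fun n => hm _ (hs n)) hd hf.integrableOn,
      integral_iUnion (fun n => hm _ (hs n)) hd hg.integrableOn]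
    exact tsum_congr h

theorem setIntegral_inter_of_indep [CompleteSpace E] [IsFiniteMeasure μ] {g : Ω → E}
    {s₁ s₂ : Set Ω} (hm₁ : m₁ ≤ m₀) (hm₂ : m₂ ≤ m₀) (hind : Indep m₁ m₂ μ)
    (hg : StronglyMeasurable[m₁] g) (hgi : Integrable g μ) (hs₁ : MeasurableSet[m₁] s₁)
    (hs₂ : MeasurableSet[m₂] s₂) : ∫ x in s₁ ∩ s₂, g x ∂μ = μ.real s₂ • ∫ x in s₁, g x ∂μ := by
  rw [Set.inter_comm, ← setIntegral_indicator (hm₁ _ hs₁),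
    ← setIntegral_condExp hm₂ (hgi.indicator (hm₁ _ hs₁)) hs₂,
    setIntegral_congr_ae (hm₂ _ hs₂)
      ((condExp_indep_eq hm₁ hm₂ (hg.indicator hs₁) hind).mono fun _ h _ => h),
    setIntegral_const, integral_indicator (hm₁ _ hs₁)]

theorem condExp_sup_of_indep [CompleteSpace E] [IsFiniteMeasure μ] {X : Ω → E} (hm : m ≤ m₁)
    (hm₁ : m₁ ≤ m₀) (hm₂ : m₂ ≤ m₀) (hind : Indep m₁ m₂ μ) (hX : StronglyMeasurable[m₁] X)
    (hXi : Integrable X μ) : μ[X | m ⊔ m₂] =ᵐ[μ] μ[X | m] := by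
  have hY : StronglyMeasurable[m₁] (μ[X | m]) := stronglyMeasurable_condExp.mono hm
  refine (ae_eq_condExp_of_forall_setIntegral_eq (sup_le (hm.trans hm₁) hm₂) hXi
    (fun _ _ _ => integrable_condExp.integrableOn) (fun s hs _ => ?_)
    (stronglyMeasurable_condExp.mono (le_sup_left : m ≤ m ⊔ m₂)).aestronglyMeasurable).symm
  refine setIntegral_eq_of_isPiSystem (sup_le (hm.trans hm₁) hm₂)
    (sup_eq_generateFrom_image2_inter m m₂) (isPiSystem_image2_inter m m₂) integrable_condExp hXi
    (integral_condExp (hm.trans hm₁)) ?_ hs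
  rintro _ ⟨s₁, hs₁, s₂, hs₂, rfl⟩
  rw [setIntegral_inter_of_indep hm₁ hm₂ hind hY integrable_condExp (hm _ hs₁) hs₂,
    setIntegral_inter_of_indep hm₁ hm₂ hind hX hXi (hm _ hs₁) hs₂,
    setIntegral_condExp (hm.trans hm₁) hXi hs₁]

theorem integral_mul_eq_of_condExp_eq_const (hm : m ≤ m₀) [SigmaFinite (μ.trim hm)]
    {g Y : Ω → ℝ} {c : ℝ} (hY : μ[Y | m] =ᵐ[μ] fun _ => c) (hg : StronglyMeasurable[m] g)
    (hgY : Integrable (fun ω => g ω * Y ω) μ) (hYi : Integrable Y μ) :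
    ∫ ω, g ω * Y ω ∂μ = c * ∫ ω, g ω ∂μ :=
  calc ∫ ω, g ω * Y ω ∂μ = ∫ ω, (μ[g * Y | m]) ω ∂μ := (integral_condExp hm).symm
    _ = ∫ ω, g ω * c ∂μ := by
      refine integral_congr_ae ?_
      filter_upwards [condExp_mul_of_stronglyMeasurable_left hg hgY hYi, hY] with ω hgY hY
      rw [hgY, Pi.mul_apply, hY]
    _ = c * ∫ ω, g ω ∂μ := by rw [integral_mul_const, mul_comm]

theorem condExp_sum_div_sum_eq_const {ι : Type*} {s : Finset ι} {X Y : ι → Ω → ℝ} {c : ℝ}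
    (hY : ∀ i ∈ s, Measurable[m] (Y i)) (hY₀ : ∀ᵐ ω ∂μ, ∑ i ∈ s, Y i ω ≠ 0)
    (hX : ∀ i ∈ s, Integrable (X i) μ) (hXY : ∀ i ∈ s, μ[X i | m] =ᵐ[μ] fun ω => c * Y i ω)
    (hint : Integrable (fun ω => (∑ i ∈ s, X i ω) / ∑ i ∈ s, Y i ω) μ) :
    μ[fun ω => (∑ i ∈ s, X i ω) / ∑ i ∈ s, Y i ω | m] =ᵐ[μ] fun _ => c := by
  have h_eq : (fun ω => (∑ i ∈ s, X i ω) / ∑ i ∈ s, Y i ω)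
      = (fun ω => (∑ i ∈ s, Y i ω)⁻¹) * ∑ i ∈ s, X i := by
    ext ω
    simp only [Pi.mul_apply, Finset.sum_apply, div_eq_inv_mul]
  have hS : StronglyMeasurable[m] fun ω => (∑ i ∈ s, Y i ω)⁻¹ :=
    (Finset.measurable_sum s hY).inv.stronglyMeasurable
  rw [h_eq] at hint ⊢
  filter_upwards [condExp_mul_of_stronglyMeasurable_left hS hint (integrable_finsetSum' s hX),
    condExp_finsetSum hX m, (Filter.eventually_all_finset s).2 hXY, hY₀] with ω hmul hsum hXY hY₀
  rw [hmul, Pi.mul_apply, hsum, Finset.sum_apply, Finset.sum_congr rfl hXY, ← Finset.mul_sum]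
  field_simp

end MeasureTheory

theorem measurable_hist {X : ℕ → Ω → ℝ} {l k : ℕ} (h : l ≤ k) : Measurable[hist X k] (X l) :=
  measurable_iff_comap_le.2 <|
    le_biSup (fun l => MeasurableSpace.comap (X l) inferInstance) (Set.mem_Iic.2 h)

theorem hist_le_comap_pi (X : ℕ → Ω → ℝ) (k : ℕ) :
    hist X k ≤ MeasurableSpace.comap (fun ω j => X j ω) MeasurableSpace.pi :=
  iSup₂_le fun l _ => Measurable.comap_le (f := X l)
    ((measurable_pi_apply l).comp (comap_measurable fun ω (j : ℕ) => X j ω))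

namespace ChainLadder

variable {m₀ : MeasurableSpace Ω}

/-- The paper's `ℬ_k`. -/
def jointHist (C : ℕ → ℕ → Ω → ℝ) (k : ℕ) : MeasurableSpace Ω :=
  ⨆ i, hist (C i) k

noncomputable def factorEstimator (C : ℕ → ℕ → Ω → ℝ) (I j : ℕ) (ω : Ω) : ℝ :=
  (∑ i ∈ Icc 1 (I - j - 1), C i (j + 1) ω) / ∑ i ∈ Icc 1 (I - j - 1), C i j ω

structure IsMackModel (μ : Measure[m₀] Ω) (C : ℕ → ℕ → Ω → ℝ) (f : ℕ → ℝ) (J : ℕ) : Prop where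
  measurable : ∀ i j, Measurable (C i j)
  integrable : ∀ i j, Integrable (C i j) μ
  ae_pos : ∀ i j, ∀ᵐ ω ∂μ, 0 < C i j ω
  iIndepFun : iIndepFun (m := fun _ => MeasurableSpace.pi) (fun i ω j => C i j ω) μ
  condExp_succ : ∀ i j, j < J → μ[C i (j + 1) | hist (C i) j] =ᵐ[μ] fun ω => f j * C i j ω

theorem measurable_jointHist {C : ℕ → ℕ → Ω → ℝ} (i : ℕ) {l k : ℕ} (h : l ≤ k) :
    Measurable[jointHist C k] (C i l) :=
  (measurable_hist h).mono (le_iSup (fun i => hist (C i) k) i) le_rfl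

theorem measurable_factorEstimator {C : ℕ → ℕ → Ω → ℝ} (I : ℕ) {l k : ℕ} (h : l < k) :
    Measurable[jointHist C k] (factorEstimator C I l) :=
  (Finset.measurable_sum _ fun i _ => measurable_jointHist i h).div
    (Finset.measurable_sum _ fun i _ => measurable_jointHist i h.le)

namespace IsMackModel

variable {μ : Measure[m₀] Ω} {C : ℕ → ℕ → Ω → ℝ} {f : ℕ → ℝ} {I J : ℕ}

theorem hist_le (hM : IsMackModel μ C f J) (i k : ℕ) : hist (C i) k ≤ m₀ :=
  (hist_le_comap_pi _ k).trans (measurable_pi_lambda _ (hM.measurable i)).comap_le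

theorem jointHist_le (hM : IsMackModel μ C f J) (k : ℕ) : jointHist C k ≤ m₀ :=
  iSup_le fun i => hM.hist_le i k

theorem condExp_jointHist [IsFiniteMeasure μ] (hM : IsMackModel μ C f J) (i : ℕ) {k : ℕ}
    (hk : k < J) :
    μ[C i (k + 1) | jointHist C k] =ᵐ[μ] fun ω => f k * C i k ω := by
  set P : ℕ → MeasurableSpace Ω := fun i =>
    MeasurableSpace.comap (fun ω j => C i j ω) MeasurableSpace.pi
  have hP : ∀ i, P i ≤ m₀ := fun i => (measurable_pi_lambda _ (hM.measurable i)).comap_le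
  have hind : Indep (P i) (⨆ i' ∈ ({i}ᶜ : Set ℕ), P i') μ := by
    simpa using indep_iSup_of_disjoint hP hM.iIndepFun.iIndep (disjoint_compl_right (a := {i}))
  rw [jointHist, iSup_split_single _ i]
  refine (condExp_sup_of_indep (hist_le_comap_pi _ _) (hP i)
    (iSup₂_le fun i' _ => hM.hist_le i' k)
    (indep_of_indep_of_le_right hind (iSup₂_mono fun i' _ => hist_le_comap_pi (C i') k))
    ((measurable_pi_apply (k + 1)).comp (comap_measurable _)).stronglyMeasurable
    (hM.integrable i (k + 1))).trans (hM.condExp_succ i k hk)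

theorem condExp_factorEstimator [IsFiniteMeasure μ] (hM : IsMackModel μ C f J) {k : ℕ}
    (hk : k < J) (hkI : k + 1 < I) (hint : Integrable (factorEstimator C I k) μ) :
    μ[factorEstimator C I k | jointHist C k] =ᵐ[μ] fun _ => f k := by
  have hsum_pos : ∀ᵐ ω ∂μ, 0 < ∑ i ∈ Icc 1 (I - k - 1), C i k ω := by
    filter_upwards [(Filter.eventually_all_finset _).2 fun i _ => hM.ae_pos i k] with ω hω
    exact Finset.sum_pos hω ⟨1, by simp; omega⟩
  exact condExp_sum_div_sum_eq_const (fun i _ => measurable_jointHist i le_rfl)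
    (hsum_pos.mono fun _ h => h.ne') (fun i _ => hM.integrable i (k + 1))
    (fun i _ => hM.condExp_jointHist i hk) hint

theorem integral_mul_factorEstimator [IsFiniteMeasure μ] (hM : IsMackModel μ C f J) {k : ℕ}
    (hk : k < J) (hkI : k + 1 < I) (hint : Integrable (factorEstimator C I k) μ) {g : Ω → ℝ}
    (hg : Measurable[jointHist C k] g)
    (hgi : Integrable (fun ω => g ω * factorEstimator C I k ω) μ) :
    ∫ ω, g ω * factorEstimator C I k ω ∂μ = f k * ∫ ω, g ω ∂μ :=
  integral_mul_eq_of_condExp_eq_const (hM.jointHist_le k) (hM.condExp_factorEstimator hk hkI hint)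
    hg.stronglyMeasurable hgi hint

theorem integral_prod_factorEstimator [IsProbabilityMeasure μ] (hM : IsMackModel μ C f J)
    (hJI : J < I) (hint : ∀ j k, j ≤ k → k ≤ J →
      Integrable (fun ω => ∏ l ∈ Ico j k, factorEstimator C I l ω) μ)
    {j n : ℕ} (hjn : j ≤ n) (hn : n ≤ J) :
    ∫ ω, ∏ l ∈ Ico j n, factorEstimator C I l ω ∂μ = ∏ l ∈ Ico j n, f l := by
  induction n, hjn using Nat.le_induction with
  | base => simp
  | succ n hjn ih =>
    have hint_n : Integrable (factorEstimator C I n) μ := by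
      simpa using hint n (n + 1) n.le_succ hn
    simp_rw [prod_Ico_succ_top hjn]
    rw [hM.integral_mul_factorEstimator hn (by omega) hint_n
      (Finset.measurable_prod _ fun l hl => measurable_factorEstimator I (mem_Ico.1 hl).2)
      (by simpa [prod_Ico_succ_top hjn] using hint j (n + 1) (hjn.trans n.le_succ) hn),
      ih (n.le_succ.trans hn), mul_comm]

end IsMackModel

end ChainLadder

end

theorem stmt_7_general {Ω : Type*} {m0 : MeasurableSpace Ω} (μ : Measure Ω) [IsProbabilityMeasure μ]
    (I J : ℕ) (hIJ : J < I)
    (C : ℕ → ℕ → Ω → ℝ) (f : ℕ → ℝ)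
    (hmeas : ∀ i j, Measurable (C i j))
    (hint : ∀ i j, Integrable (C i j) μ)
    (hpos : ∀ i j, ∀ᵐ ω ∂μ, 0 < C i j ω)
    (hindep : ProbabilityTheory.iIndepFun (m := fun _ => MeasurableSpace.pi)
      (fun i ω j => C i j ω) μ)
    (hCL : ∀ i j, j < J → μ[C i (j + 1) | hist (C i) j] =ᵐ[μ] fun ω => f j * C i j ω)
    (fhat : ℕ → Ω → ℝ)
    (hfhat : ∀ j, fhat j = fun ω =>
      (∑ i ∈ Icc 1 (I - j - 1), C i (j + 1) ω) / (∑ i ∈ Icc 1 (I - j - 1), C i j ω))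
    (hIntPair : ∀ j k, j < k → k < J → Integrable (fun ω => fhat j ω * fhat k ω) μ)
    (hIntProd : ∀ j k, j ≤ k → k ≤ J → Integrable (fun ω => ∏ l ∈ Ico j k, fhat l ω) μ) :
    (∀ j k, j < k → k < J → ∫ ω, fhat j ω * fhat k ω ∂μ = f j * f k)
    ∧ ∀ j, j < J → ∫ ω, ∏ l ∈ Ico j J, fhat l ω ∂μ = ∏ l ∈ Ico j J, f l := by
  have hM : ChainLadder.IsMackModel μ C f J := ⟨hmeas, hint, hpos, hindep, hCL⟩
  obtain rfl : fhat = ChainLadder.factorEstimator C I := funext hfhat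
  have hunbiased : ∀ j < J, ∫ ω, ChainLadder.factorEstimator C I j ω ∂μ = f j := fun j hj => by
    simpa using hM.integral_prod_factorEstimator hIJ hIntProd j.le_succ hj
  refine ⟨fun j k hjk hkJ => ?_,
    fun j hj => hM.integral_prod_factorEstimator hIJ hIntProd hj.le le_rfl⟩
  rw [hM.integral_mul_factorEstimator hkJ (by omega)
      (by simpa using hIntProd k (k + 1) k.le_succ hkJ)
      (ChainLadder.measurable_factorEstimator I hjk) (hIntPair j k hjk hkJ),
    hunbiased j (hjk.trans hkJ), mul_comm]

/-- Uncorrelatedness of successive chain-ladder estimators: `E[f̂_j f̂_k] = f_j f_k` for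
`j < k`, and consequently `E[∏_{l=j}^{J-1} f̂_l] = ∏_{l=j}^{J-1} f_l`. -/
theorem stmt_7 {Ω : Type*} {m0 : MeasurableSpace Ω} (μ : Measure Ω) [IsProbabilityMeasure μ]
    (I J : ℕ) (hJ : 1 ≤ J) (hIJ : J < I)
    (C : ℕ → ℕ → Ω → ℝ) (f : ℕ → ℝ)
    (hmeas : ∀ i j, Measurable (C i j))
    (hint : ∀ i j, Integrable (C i j) μ)
    (hpos : ∀ i j, ∀ᵐ ω ∂μ, 0 < C i j ω)
    (hf : ∀ j, j < J → 0 < f j)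
    (hindep : ProbabilityTheory.iIndepFun (m := fun _ => MeasurableSpace.pi)
      (fun i ω j => C i j ω) μ)
    (hCL : ∀ i j, j < J → μ[C i (j + 1) | hist (C i) j] =ᵐ[μ] fun ω => f j * C i j ω)
    (fhat : ℕ → Ω → ℝ)
    (hfhat : ∀ j, fhat j = fun ω =>
      (∑ i ∈ Icc 1 (I - j - 1), C i (j + 1) ω) / (∑ i ∈ Icc 1 (I - j - 1), C i j ω))
    (hIntPair : ∀ j k, j < k → k < J → Integrable (fun ω => fhat j ω * fhat k ω) μ)
    (hIntProd : ∀ j k, j ≤ k → k ≤ J → Integrable (fun ω => ∏ l ∈ Ico j k, fhat l ω) μ) :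
    (∀ j k, j < k → k < J → ∫ ω, fhat j ω * fhat k ω ∂μ = f j * f k)
    ∧ ∀ j, j < J → ∫ ω, ∏ l ∈ Ico j J, fhat l ω ∂μ = ∏ l ∈ Ico j J, f l :=
  stmt_7_general (m0 := m0) μ I J hIJ C f hmeas hint hpos hindep hCL fhat hfhat hIntPair hIntProd
end

section
/- Multi-step conditional variance formula: in Mack's chain-ladder model, for $j < J$, $\mathrm{Var}(C_{i,J} \mid \mathcal{F}_{i,j}) = C_{i,j} \sum_{k=j}^{J-1} \sigma_k^2 \left(\prod_{l=j}^{k-1} f_l\right)\left(\prod_{l=k+1}^{J-1} f_l^2\right)$ almost surely. -/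
/-!
Condition on `ℱ_{j+1}` first (tower property). By backward induction, `E[C_J | ℱ_{j+1}]` and
`E[C_J² | ℱ_{j+1}]` are polynomials of degree one, resp. two, in `C_{j+1}` with deterministic coefficients, so
one more conditioning step only needs the first two conditional moments of `C_{j+1}` given `ℱ_j`,
which the model specifies. The coefficient of `C_j` in `E[C_J² | ℱ_j]` then obeys the recursion
`a_j = σ_j² (∏_{l>j} f_l)² + f_j a_{j+1}`, whose solution is the claimed sum.
-/

open MeasureTheory Finset

section History

variable {Ω : Type*} {m0 : MeasurableSpace Ω} (C : ℕ → Ω → ℝ)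

lemma hist_mono : Monotone (hist C) :=
  fun _ _ hab => biSup_mono fun _ hk => le_trans hk hab

lemma measurable_hist_s10 (j : ℕ) : Measurable[hist C j] (C j) :=
  measurable_iff_comap_le.mpr
    (le_biSup (fun i => MeasurableSpace.comap (C i) inferInstance) (Set.mem_Iic.mpr le_rfl))

variable {C}

lemma hist_le (hmeas : ∀ j, Measurable (C j)) (j : ℕ) : hist C j ≤ m0 :=
  iSup₂_le fun i _ => measurable_iff_comap_le.mp (hmeas i)

end History

/-- The coefficient of `C_j` in `Var(C_J | ℱ_j)`. -/
def mackVarCoeff (f σ2 : ℕ → ℝ) (j J : ℕ) : ℝ :=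
  ∑ k ∈ Ico j J, σ2 k * (∏ l ∈ Ico j k, f l) * (∏ l ∈ Ico (k + 1) J, (f l) ^ 2)

@[simp]
lemma mackVarCoeff_self (f σ2 : ℕ → ℝ) (J : ℕ) : mackVarCoeff f σ2 J J = 0 := by
  simp [mackVarCoeff]

lemma mackVarCoeff_of_lt (f σ2 : ℕ → ℝ) {j J : ℕ} (hj : j < J) :
    mackVarCoeff f σ2 j J
      = σ2 j * (∏ l ∈ Ico (j + 1) J, f l) ^ 2 + f j * mackVarCoeff f σ2 (j + 1) J := by
  rw [mackVarCoeff, sum_eq_sum_Ico_succ_bot hj, mackVarCoeff, mul_sum, prod_pow]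
  congr 1
  · simp
  · refine sum_congr rfl fun k hk => ?_
    rw [prod_eq_prod_Ico_succ_bot (by have := (mem_Ico.mp hk).1; omega)]
    ring

section CondExp

variable {Ω : Type*} {m m0 : MeasurableSpace Ω} {μ : Measure Ω}

lemma condExp_const_mul_ae_eq (c : ℝ) (X : Ω → ℝ) :
    μ[fun ω => c * X ω | m] =ᵐ[μ] fun ω => c * μ[X | m] ω :=
  condExp_smul c X m

lemma condExp_const_mul_add_const_mul {X Y : Ω → ℝ} (hX : Integrable X μ) (hY : Integrable Y μ)
    (a b : ℝ) :
    μ[fun ω => a * X ω + b * Y ω | m] =ᵐ[μ] fun ω => a * μ[X | m] ω + b * μ[Y | m] ω := by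
  filter_upwards [condExp_add (hX.const_mul a) (hY.const_mul b) m,
    condExp_const_mul_ae_eq (m := m) (μ := μ) a X,
    condExp_const_mul_ae_eq (m := m) (μ := μ) b Y] with ω hadd hX' hY'
  exact hadd.trans (by rw [Pi.add_apply, hX', hY'])

lemma condExp_sq_ae_eq_of_condVar {X mean var : Ω → ℝ} (hmean : μ[X | m] =ᵐ[μ] mean)
    (hvar : (fun ω => μ[fun ω => X ω ^ 2 | m] ω - μ[X | m] ω ^ 2) =ᵐ[μ] var) :
    μ[fun ω => X ω ^ 2 | m] =ᵐ[μ] fun ω => var ω + mean ω ^ 2 := by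
  filter_upwards [hmean, hvar] with ω hm hv
  rw [← hv, hm, sub_add_cancel]

end CondExp

section Mack

variable {Ω : Type*} {m0 : MeasurableSpace Ω} {μ : Measure Ω} [IsFiniteMeasure μ]
  {J : ℕ} {C : ℕ → Ω → ℝ} {f σ2 : ℕ → ℝ}

lemma condExp_hist_terminal (hmeas : ∀ j, Measurable (C j)) (hint : ∀ j, Integrable (C j) μ)
    (hCL : ∀ j, j < J → μ[C (j + 1) | hist C j] =ᵐ[μ] fun ω => f j * C j ω)
    {j : ℕ} (hj : j ≤ J) :
    μ[C J | hist C j] =ᵐ[μ] fun ω => (∏ l ∈ Ico j J, f l) * C j ω := by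
  induction hj using Nat.decreasingInduction with
  | self =>
    rw [condExp_of_stronglyMeasurable (hist_le hmeas J) (measurable_hist_s10 C J).stronglyMeasurable
      (hint J)]
    simp
  | of_succ j hj ih =>
    calc μ[C J | hist C j]
        =ᵐ[μ] μ[μ[C J | hist C (j + 1)] | hist C j] :=
          (condExp_condExp_of_le (hist_mono C j.le_succ) (hist_le hmeas _)).symm
      _ =ᵐ[μ] μ[fun ω => (∏ l ∈ Ico (j + 1) J, f l) * C (j + 1) ω | hist C j] :=
          condExp_congr_ae ih
      _ =ᵐ[μ] fun ω => (∏ l ∈ Ico (j + 1) J, f l) * μ[C (j + 1) | hist C j] ω :=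
          condExp_const_mul_ae_eq _ _
      _ =ᵐ[μ] fun ω => (∏ l ∈ Ico j J, f l) * C j ω := by
          filter_upwards [hCL j hj] with ω hω
          rw [hω, prod_eq_prod_Ico_succ_bot hj]
          ring

lemma condExp_hist_terminal_sq (hmeas : ∀ j, Measurable (C j)) (hL2 : ∀ j, MemLp (C j) 2 μ)
    (hCL : ∀ j, j < J → μ[C (j + 1) | hist C j] =ᵐ[μ] fun ω => f j * C j ω)
    (hVar : ∀ j, j < J →
      (fun ω => μ[fun ω => C (j + 1) ω ^ 2 | hist C j] ω - μ[C (j + 1) | hist C j] ω ^ 2)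
        =ᵐ[μ] fun ω => σ2 j * C j ω)
    {j : ℕ} (hj : j ≤ J) :
    μ[fun ω => C J ω ^ 2 | hist C j] =ᵐ[μ]
      fun ω => mackVarCoeff f σ2 j J * C j ω + (∏ l ∈ Ico j J, f l) ^ 2 * C j ω ^ 2 := by
  induction hj using Nat.decreasingInduction with
  | self =>
    rw [condExp_of_stronglyMeasurable (hist_le hmeas J)
      ((measurable_hist_s10 C J).pow_const 2).stronglyMeasurable (hL2 J).integrable_sq]
    simp
  | of_succ j hj ih =>
    set P := ∏ l ∈ Ico (j + 1) J, f l
    calc μ[fun ω => C J ω ^ 2 | hist C j]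
        =ᵐ[μ] μ[μ[fun ω => C J ω ^ 2 | hist C (j + 1)] | hist C j] :=
          (condExp_condExp_of_le (hist_mono C j.le_succ) (hist_le hmeas _)).symm
      _ =ᵐ[μ] μ[fun ω => mackVarCoeff f σ2 (j + 1) J * C (j + 1) ω + P ^ 2 * C (j + 1) ω ^ 2
            | hist C j] :=
          condExp_congr_ae ih
      _ =ᵐ[μ] fun ω => mackVarCoeff f σ2 (j + 1) J * μ[C (j + 1) | hist C j] ω
            + P ^ 2 * μ[fun ω => C (j + 1) ω ^ 2 | hist C j] ω :=
          condExp_const_mul_add_const_mul ((hL2 _).integrable one_le_two) (hL2 _).integrable_sq _ _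
      _ =ᵐ[μ] fun ω => mackVarCoeff f σ2 j J * C j ω + (∏ l ∈ Ico j J, f l) ^ 2 * C j ω ^ 2 := by
          filter_upwards [hCL j hj, condExp_sq_ae_eq_of_condVar (hCL j hj) (hVar j hj)]
            with ω hmean hsq
          rw [hmean, hsq, mackVarCoeff_of_lt f σ2 hj, prod_eq_prod_Ico_succ_bot hj]
          ring

end Mack

theorem stmt_10_general {Ω : Type*} {m0 : MeasurableSpace Ω} (μ : Measure Ω) [IsProbabilityMeasure μ]
    (J : ℕ) (C : ℕ → Ω → ℝ) (f σ2 : ℕ → ℝ)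
    (hmeas : ∀ j, Measurable (C j))
    (hL2 : ∀ j, MemLp (C j) 2 μ)
    (hCL : ∀ j, j < J → μ[C (j + 1) | hist C j] =ᵐ[μ] fun ω => f j * C j ω)
    (hVar : ∀ j, j < J →
      (fun ω => (μ[fun ω => (C (j + 1) ω) ^ 2 | hist C j]) ω
          - ((μ[C (j + 1) | hist C j]) ω) ^ 2)
        =ᵐ[μ] fun ω => σ2 j * C j ω)
    (j : ℕ) (hj : j < J) :
    (fun ω => (μ[fun ω => (C J ω) ^ 2 | hist C j]) ω - ((μ[C J | hist C j]) ω) ^ 2)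
      =ᵐ[μ] fun ω => C j ω *
        ∑ k ∈ Ico j J, σ2 k * (∏ l ∈ Ico j k, f l) * (∏ l ∈ Ico (k + 1) J, (f l) ^ 2) := by
  filter_upwards [condExp_hist_terminal hmeas (fun k => (hL2 k).integrable one_le_two) hCL hj.le,
    condExp_hist_terminal_sq hmeas hL2 hCL hVar hj.le] with ω hmean hsq
  rw [hmean, hsq, mackVarCoeff]
  ring

/-- Multi-step conditional variance formula in Mack's chain-ladder model:
`Var(C_J | ℱ_j) = C_j ∑_{k=j}^{J-1} σ_k² (∏_{l=j}^{k-1} f_l)(∏_{l=k+1}^{J-1} f_l²)` a.s. -/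
theorem stmt_10 {Ω : Type*} {m0 : MeasurableSpace Ω} (μ : Measure Ω) [IsProbabilityMeasure μ]
    (J : ℕ) (C : ℕ → Ω → ℝ) (f σ2 : ℕ → ℝ)
    (hmeas : ∀ j, Measurable (C j))
    (hL2 : ∀ j, MemLp (C j) 2 μ)
    (hpos : ∀ j, ∀ᵐ ω ∂μ, 0 < C j ω)
    (hf : ∀ j, j < J → 0 < f j) (hσ : ∀ j, j < J → 0 < σ2 j)
    (hCL : ∀ j, j < J → μ[C (j + 1) | hist C j] =ᵐ[μ] fun ω => f j * C j ω)
    (hVar : ∀ j, j < J →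
      (fun ω => (μ[fun ω => (C (j + 1) ω) ^ 2 | hist C j]) ω
          - ((μ[C (j + 1) | hist C j]) ω) ^ 2)
        =ᵐ[μ] fun ω => σ2 j * C j ω)
    (j : ℕ) (hj : j < J) :
    (fun ω => (μ[fun ω => (C J ω) ^ 2 | hist C j]) ω - ((μ[C J | hist C j]) ω) ^ 2)
      =ᵐ[μ] fun ω => C j ω *
        ∑ k ∈ Ico j J, σ2 k * (∏ l ∈ Ico j k, f l) * (∏ l ∈ Ico (k + 1) J, (f l) ^ 2) :=
  stmt_10_general (m0 := m0) μ J C f σ2 hmeas hL2 hCL hVar j hj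
end
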